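/- Let I ⊆ (0,∞) be an open interval and h : I → ℝ a differentiable function satisfying z(h'(z) − h(z)² + 1) + 5h(z) = 0 and z·h(z) − 1 ≠ 0 on I. Then the function π(z) := 1/(z·h(z) − 1) satisfies z·π'(z) − (3+z²)·π(z)² − 2π(z) + 1 = 0 on I. -/

import Mathlib

/-!
With `π = 1/(zh − 1)` one has `π' = −(h + zh')/(zh − 1)²`. Eliminating `h'` through the Riccati
equation `zh' = z(h² − 1) − 5h` and clearing the factor `(zh − 1)²` turns the claimed equation
into a polynomial identity in `z` and `h`.
-/

theorem hasDerivAt_one_div_mul_self_sub_one {h : ℝ → ℝ} {h' z : ℝ} (hh : HasDerivAt h h' z)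
    (hne : z * h z - 1 ≠ 0) :
    HasDerivAt (fun t => 1 / (t * h t - 1)) (-(h z + z * h') / (z * h z - 1) ^ 2) z := by
  have hden : HasDerivAt (fun t => t * h t - 1) (1 * h z + z * h') z :=
    ((hasDerivAt_id z).mul hh).sub_const 1
  simpa [one_div, Pi.inv_def] using hden.inv hne

theorem synge_pi_ode_at {h : ℝ → ℝ} {z : ℝ} (hdiff : DifferentiableAt ℝ h z)
    (hne : z * h z - 1 ≠ 0) (hode : z * (deriv h z - h z ^ 2 + 1) + 5 * h z = 0) :
    z * deriv (fun t => 1 / (t * h t - 1)) z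
      - (3 + z ^ 2) * (1 / (z * h z - 1)) ^ 2 - 2 * (1 / (z * h z - 1)) + 1 = 0 := by
  rw [(hasDerivAt_one_div_mul_self_sub_one hdiff.hasDerivAt hne).deriv]
  field_simp
  linear_combination (-z) * hode

theorem synge_pi_ode
    (I : Set ℝ)
    (h : ℝ → ℝ)
    (hdiff : ∀ z ∈ I, DifferentiableAt ℝ h z)
    (hne : ∀ z ∈ I, z * h z - 1 ≠ 0)
    (hode : ∀ z ∈ I, z * (deriv h z - h z ^ 2 + 1) + 5 * h z = 0) :
    ∀ z ∈ I,
      z * deriv (fun t => 1 / (t * h t - 1)) z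
        - (3 + z ^ 2) * (1 / (z * h z - 1)) ^ 2 - 2 * (1 / (z * h z - 1)) + 1 = 0 :=
  fun z hz => synge_pi_ode_at (hdiff z hz) (hne z hz) (hode z hz)
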